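/- Let H and G be groups, let α : H → G be a surjective group homomorphism, and let H act on a set S. Let H₀ ≤ H₁ ≤ H be subgroups such that α(H₁) = G, let C ≤ H be a subgroup with ker α ≤ C, and let x ∈ S. If the orbit of x under H₀ ∩ C equals the orbit of x under C, then the orbit of x under H₁ equals the orbit of x under H. -/

import Mathlib

/-!
Since `α(H₁) = G`, every `h ∈ H` factors as `h = h₁ k` with `h₁ ∈ H₁` and `k ∈ ker α ≤ C`.
Then `k • x` lies in the `C`-orbit, which is the `(H₀ ⊓ C)`-orbit and hence inside the
`H₁`-orbit, so `h • x = h₁ • (k • x)` lies in the `H₁`-orbit as well.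
-/

theorem Subgroup.exists_mul_mem_ker_eq_of_map_eq_top {H G : Type*} [Group H] [Group G]
    {α : H →* G} {L : Subgroup H} (hL : L.map α = ⊤) (h : H) :
    ∃ l ∈ L, ∃ k ∈ α.ker, l * k = h :=
  mem_sup_of_normal_right.mp <| by rw [← comap_map_eq, hL]; trivial

theorem image_smul_eq_range_of_forall_exists_mul {H S : Type*} [Group H] [MulAction H S]
    {L C : Subgroup H} (hLC : ∀ h : H, ∃ l ∈ L, ∃ c ∈ C, l * c = h) {x : S}
    (hC : (fun h : H => h • x) '' C ⊆ (fun h : H => h • x) '' L) :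
    (fun h : H => h • x) '' L = Set.range fun h : H => h • x := by
  refine (Set.image_subset_range _ _).antisymm ?_
  rintro _ ⟨h, rfl⟩
  obtain ⟨l, hl, c, hc, rfl⟩ := hLC h
  obtain ⟨l', hl', hcx⟩ := hC ⟨c, hc, rfl⟩
  exact ⟨l * l', L.mul_mem hl hl', by simp only [mul_smul, hcx]⟩

theorem orbit_eq_of_inf_orbit_eq_general {H G S : Type*} [Group H] [Group G] [MulAction H S]
    (α : H →* G)
    (H₀ H₁ C : Subgroup H) (h01 : H₀ ≤ H₁)
    (hH1 : Subgroup.map α H₁ = ⊤)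
    (hker : α.ker ≤ C) (x : S)
    (horb : (fun h : H => h • x) '' ↑(H₀ ⊓ C) = (fun h : H => h • x) '' ↑C) :
    (fun h : H => h • x) '' ↑H₁ = Set.range fun h : H => h • x := by
  refine image_smul_eq_range_of_forall_exists_mul (C := C) (fun h => ?_) ?_
  · obtain ⟨h₁, hh₁, k, hk, rfl⟩ := Subgroup.exists_mul_mem_ker_eq_of_map_eq_top hH1 h
    exact ⟨h₁, hh₁, k, hker hk, rfl⟩
  · rw [← horb]
    exact Set.image_mono (inf_le_left.trans h01)

/-- Let `H` and `G` be groups, `α : H → G` a surjective group homomorphism,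
and let `H` act on a set `S`. Let `H₀ ≤ H₁ ≤ H` be subgroups with `α(H₁) = G`, let
`C ≤ H` be a subgroup with `ker α ≤ C`, and let `x ∈ S`. If the orbit of `x` under
`H₀ ∩ C` equals the orbit of `x` under `C`, then the orbit of `x` under `H₁` equals the
orbit of `x` under `H`. -/
theorem orbit_eq_of_inf_orbit_eq {H G S : Type*} [Group H] [Group G] [MulAction H S]
    (α : H →* G) (hα : Function.Surjective α)
    (H₀ H₁ C : Subgroup H) (h01 : H₀ ≤ H₁)
    (hH1 : Subgroup.map α H₁ = ⊤)
    (hker : α.ker ≤ C) (x : S)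
    (horb : (fun h : H => h • x) '' ↑(H₀ ⊓ C) = (fun h : H => h • x) '' ↑C) :
    (fun h : H => h • x) '' ↑H₁ = Set.range fun h : H => h • x :=
  orbit_eq_of_inf_orbit_eq_general α H₀ H₁ C h01 hH1 hker x horb
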